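/- Let m ∈ ℕ with 4 | m, r ∈ ℤ with gcd(r, m) = 1, and set ζ := e(r/m). Let r̿ ∈ {1, −1} with r̿ ≡ r (mod 4). Then for all integers n, n₀ ≥ 0 with n ≡ n₀ (mod m/2), one has ζ^{n(n+1)/2} · (−1)^{2(n−n₀)/m} = ζ^{n₀(n₀+1)/2} · e( (−1)^{m/4 + n₀ + 1} · r̿ · (n − n₀)/(2m) ). (Note that 2(n − n₀)/m is an integer since (m/2) | (n − n₀).) -/

import Mathlib

/-- `e(x) = e^{2πix}`. -/
noncomputable def e (x : ℝ) : ℂ := Complex.exp (2 * Real.pi * Complex.I * x)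

/-!
Write `m = 4t` and `n = n₀ + 2tk`, so that `2(n - n₀)/m = k` and
`n(n+1)/2 = n₀(n₀+1)/2 + tk(2n₀ + 1 + 2tk)`. Expressing `ζ` and `-1 = e(1/2)` through `e`, the two
sides become `e` of arguments that differ by `k(r(2n₀ + 1 + 2tk) + 2 - (-1)^{t+n₀+1} r̿)/4`. This is an
integer: modulo 4 one may replace `r` by `r̿` and `(-1)^j` by `2j + 1`, and what remains is a
congruence in `ZMod 4` that is checked exhaustively.
-/

lemma e_add (x y : ℝ) : e (x + y) = e x * e y := by
  simp only [e, ← Complex.exp_add]; push_cast; ring_nf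

lemma e_ne_zero (x : ℝ) : e x ≠ 0 := Complex.exp_ne_zero _

lemma e_intCast (z : ℤ) : e z = 1 := by
  simpa [e, mul_comm, mul_assoc, mul_left_comm] using Complex.exp_int_mul_two_pi_mul_I z

lemma e_zpow (x : ℝ) (a : ℤ) : e x ^ a = e (a * x) := by
  rw [e, e, ← Complex.exp_int_mul]; push_cast; ring_nf

lemma neg_one_zpow_eq_e (k : ℤ) : (-1 : ℂ) ^ k = e (k / 2) := by
  have h : e (1 / 2) = -1 := by
    rw [e, ← Complex.exp_pi_mul_I]; push_cast; ring_nf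
  rw [← h, e_zpow, mul_one_div]

lemma e_intCast_div_eq_of_modEq {N a b : ℤ} (h : a ≡ b [ZMOD N]) :
    e (a / N) = e (b / N) := by
  obtain ⟨c, hc⟩ := Int.modEq_iff_dvd.mp h
  rcases eq_or_ne N 0 with rfl | hN
  · simp
  have hb : (b : ℝ) = a + N * c := by exact_mod_cast (eq_add_of_sub_eq' hc)
  rw [hb, add_div, mul_div_cancel_left₀ _ (Int.cast_ne_zero.mpr hN), e_add, e_intCast, mul_one]

lemma triangular_add_two_mul (a d : ℤ) :
    (a + 2 * d) * (a + 2 * d + 1) / 2 = a * (a + 1) / 2 + d * (2 * a + 1 + 2 * d) := by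
  rw [show (a + 2 * d) * (a + 2 * d + 1) = a * (a + 1) + 2 * (d * (2 * a + 1 + 2 * d)) by ring,
    Int.add_mul_ediv_left _ _ two_ne_zero]

lemma negOnePow_modEq_four (j : ℤ) : (j.negOnePow : ℤ) ≡ 2 * j + 1 [ZMOD 4] := by
  rcases j.even_or_odd' with ⟨i, rfl | rfl⟩
  · rw [Int.negOnePow_even _ (by simp), Units.val_one]
    exact Int.modEq_iff_dvd.mpr ⟨i, by ring⟩
  · rw [Int.negOnePow_odd _ (by simp), Units.val_neg, Units.val_one]
    exact Int.modEq_iff_dvd.mpr ⟨i + 1, by ring⟩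

lemma triangular_shift_modEq_four {r ρ : ℤ} (hρ : Odd ρ) (hr : r ≡ ρ [ZMOD 4]) (t n₀ k : ℤ) :
    k * (r * (2 * n₀ + 1 + 2 * t * k) + 2) ≡ k * ((t + n₀ + 1).negOnePow * ρ) [ZMOD 4] := by
  obtain ⟨i, rfl⟩ := hρ
  have hs := negOnePow_modEq_four (t + n₀ + 1)
  replace hr := (ZMod.intCast_eq_intCast_iff _ _ 4).mpr hr
  replace hs := (ZMod.intCast_eq_intCast_iff _ _ 4).mpr hs
  apply (ZMod.intCast_eq_intCast_iff _ _ 4).mp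
  push_cast at hr hs ⊢
  rw [hr, hs]
  generalize (k : ZMod 4) = K, (t : ZMod 4) = T, (n₀ : ZMod 4) = N, (i : ZMod 4) = I
  revert K T N I
  decide

theorem e_zpow_triangular_shift {t : ℕ} (ht : t ≠ 0) {r ρ : ℤ} (hρ : Odd ρ)
    (hr : r ≡ ρ [ZMOD 4]) (n₀ k : ℤ) :
    e (r / (4 * t)) ^ ((n₀ + 2 * t * k) * (n₀ + 2 * t * k + 1) / 2) * (-1 : ℂ) ^ k =
      e (r / (4 * t)) ^ (n₀ * (n₀ + 1) / 2) *
        e ((-1 : ℝ) ^ ((t : ℤ) + n₀ + 1) * ρ * ((2 * t * k : ℤ) / (2 * (4 * t)))) := by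
  rw [mul_assoc 2 (t : ℤ) k, triangular_add_two_mul, zpow_add₀ (e_ne_zero _), mul_assoc]
  congr 1
  rw [e_zpow, neg_one_zpow_eq_e, ← e_add, ← Int.cast_negOnePow]
  convert e_intCast_div_eq_of_modEq (triangular_shift_modEq_four hρ hr t n₀ k) using 2
  · push_cast
    field_simp
    ring
  · push_cast
    field_simp

theorem zeta_pow_triangular_sign_general (m : ℕ) (hm : 4 ∣ m) (r : ℤ)
    (ζ : ℂ) (hζ : ζ = e ((r : ℝ) / m))
    (rbb : ℤ) (hrbb : rbb = 1 ∨ rbb = -1) (hrbb4 : rbb % 4 = r % 4)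
    (n n₀ : ℤ) (hcong : ((m / 2 : ℕ) : ℤ) ∣ n - n₀) :
    ζ ^ (n * (n + 1) / 2) * (-1 : ℂ) ^ (2 * (n - n₀) / (m : ℤ)) =
      ζ ^ (n₀ * (n₀ + 1) / 2) *
        e ((-1 : ℝ) ^ (((m / 4 : ℕ) : ℤ) + n₀ + 1) * (rbb : ℝ) *
            (((n - n₀ : ℤ) : ℝ) / (2 * m))) := by
  obtain ⟨t, rfl⟩ := hm
  subst hζ
  rcases eq_or_ne t 0 with rfl | ht
  · obtain rfl : n = n₀ := by simpa [sub_eq_zero] using hcong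
    simp [e]
  obtain ⟨k, hk⟩ : ∃ k, n = n₀ + 2 * t * k := by
    obtain ⟨k, hk⟩ := hcong
    have h2t : ((4 * t / 2 : ℕ) : ℤ) = 2 * t := by omega
    exact ⟨k, by rw [h2t] at hk; linarith⟩
  subst hk
  have hρ : Odd rbb := by rcases hrbb with rfl | rfl <;> decide
  have hsign : 2 * (2 * t * k) / ((4 * t : ℕ) : ℤ) = k := by
    rw [show 2 * (2 * t * k) = ((4 * t : ℕ) : ℤ) * k by push_cast; ring]
    exact Int.mul_ediv_cancel_left _ (by positivity)
  rw [Nat.mul_div_cancel_left t four_pos, add_sub_cancel_left, hsign]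
  push_cast
  exact_mod_cast e_zpow_triangular_shift ht hρ hrbb4.symm n₀ k

/-- Lemma (part 2): for `4 ∣ m`, `gcd(r,m) = 1`, `ζ = e(r/m)`, `r̿ ∈ {1,−1}` with
`r̿ ≡ r (mod 4)`, and all `n ≡ n₀ (mod m/2)` with `n, n₀ ≥ 0`, one has
`ζ^{n(n+1)/2}·(−1)^{2(n−n₀)/m} = ζ^{n₀(n₀+1)/2}·e((−1)^{m/4+n₀+1}·r̿·(n−n₀)/(2m))`. -/
theorem zeta_pow_triangular_sign (m : ℕ) (hm : 4 ∣ m) (r : ℤ) (hgcd : Int.gcd r m = 1)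
    (ζ : ℂ) (hζ : ζ = e ((r : ℝ) / m))
    (rbb : ℤ) (hrbb : rbb = 1 ∨ rbb = -1) (hrbb4 : rbb % 4 = r % 4)
    (n n₀ : ℤ) (hn : 0 ≤ n) (hn₀ : 0 ≤ n₀) (hcong : ((m / 2 : ℕ) : ℤ) ∣ n - n₀) :
    ζ ^ (n * (n + 1) / 2) * (-1 : ℂ) ^ (2 * (n - n₀) / (m : ℤ)) =
      ζ ^ (n₀ * (n₀ + 1) / 2) *
        e ((-1 : ℝ) ^ (((m / 4 : ℕ) : ℤ) + n₀ + 1) * (rbb : ℝ) *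
            (((n - n₀ : ℤ) : ℝ) / (2 * m))) :=
  zeta_pow_triangular_sign_general m hm r ζ hζ rbb hrbb hrbb4 n n₀ hcong
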